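/- arXiv:2002.01884 — 2 statements merged into one kernel-verified Lean document; each statement's English description precedes it below -/
import Mathlib

section
/- Let λ ∈ ℝ, α > 0, 0 < β < α, δ > 0, and set γ = √(α² − β²). If x ∈ ℝ satisfies (x/√(δ² + x²)) · K_{λ−3/2}(α√(δ² + x²)) / K_{λ−1/2}(α√(δ² + x²)) = β/α (the mode equation of the generalized hyperbolic distribution GH(λ, α, β, δ, 0)), then x < (β/γ²)·[λ − 1/2 + √((λ − 1/2)² + δ²γ²)]. -/
/-!
Write `y = α √(δ² + x²)` and `μ = λ - 1/2`. The recurrence `y (K_{μ+1} - K_{μ-1}) = 2μ K_μ` and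
the Turán-type inequality `K_μ² < K_{μ-1} K_{μ+1}` (integrate the pointwise identity
`cosh((μ-1)t) cosh((μ+1)t) = cosh²(μt) + sinh² t`) combine into a quadratic inequality for
`K_μ / K_{μ-1}`, whence `y K_μ(y) < (μ + √(μ² + y²)) K_{μ-1}(y)`. Substituting the mode equation
gives `α² x < β (μ + √(μ² + α²(δ² + x²)))` with `x > 0`; after squaring, this says that
`γ² x² - 2βμ x - β²δ²` is negative at `x`, so `x` lies below the larger root of that quadratic.
-/

open Real MeasureTheory

noncomputable def besselK (ν x : ℝ) : ℝ :=
  ∫ t in Set.Ioi (0:ℝ), Real.exp (-x * Real.cosh t) * Real.cosh (ν * t)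

open Set Filter Topology

lemma Real.sq_le_sinh_sq (u : ℝ) : u ^ 2 ≤ sinh u ^ 2 := by
  rcases le_total 0 u with h | h
  · nlinarith [self_le_sinh_iff.2 h]
  · nlinarith [sinh_le_self_iff.2 h]

lemma Real.one_add_sq_div_two_le_cosh (t : ℝ) : 1 + t ^ 2 / 2 ≤ cosh t := by
  have h := cosh_two_mul (t / 2)
  rw [show 2 * (t / 2) = t by ring] at h
  nlinarith [cosh_sq (t / 2), sq_le_sinh_sq (t / 2)]

lemma Real.cosh_le_exp_abs (u : ℝ) : cosh u ≤ exp |u| := by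
  rw [cosh_eq]
  linarith [exp_le_exp.2 (le_abs_self u), exp_le_exp.2 (neg_le_abs u)]

lemma Real.abs_sinh_le_cosh (u : ℝ) : |sinh u| ≤ cosh u := by
  nlinarith [cosh_sq u, cosh_pos u, abs_nonneg (sinh u), sq_abs (sinh u)]

lemma Real.cosh_sub_mul_cosh_add (a b : ℝ) :
    cosh (a - b) * cosh (a + b) = cosh a ^ 2 + sinh b ^ 2 := by
  rw [cosh_sub, cosh_add]
  nlinarith [cosh_sq a, cosh_sq b]

lemma setIntegral_lt_setIntegral_of_forall_lt {X : Type*} [MeasurableSpace X] {μ : Measure X}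
    {s : Set X} {f g : X → ℝ} (hs : MeasurableSet s) (hμs : μ s ≠ 0)
    (hf : IntegrableOn f s μ) (hg : IntegrableOn g s μ) (hfg : ∀ x ∈ s, f x < g x) :
    ∫ x in s, f x ∂μ < ∫ x in s, g x ∂μ := by
  rw [← sub_pos, ← integral_sub hg hf]
  refine (setIntegral_pos_iff_support_of_nonneg_ae (f := fun x => g x - f x) ?_ (hg.sub hf)).2 ?_
  · filter_upwards [ae_restrict_mem hs] with x hx using (sub_pos.2 (hfg x hx)).le
  · exact (pos_iff_ne_zero.2 hμs).trans_le
      (measure_mono fun x hx => ⟨(sub_pos.2 (hfg x hx)).ne', hx⟩)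

noncomputable def besselKIntegrand (ν x t : ℝ) : ℝ :=
  exp (-x * cosh t) * cosh (ν * t)

section Bessel

variable (ν : ℝ) {x : ℝ}

lemma besselKIntegrand_pos (t : ℝ) : 0 < besselKIntegrand ν x t := by
  unfold besselKIntegrand
  positivity

lemma besselKIntegrand_le_gaussian (hx : 0 < x) {t : ℝ} (ht : 0 ≤ t) :
    besselKIntegrand ν x t ≤
      exp (ν ^ 2 / (2 * x) - x) * exp (-(x / 2) * (t - |ν| / x) ^ 2) := by
  calc besselKIntegrand ν x t ≤ exp (-x * (1 + t ^ 2 / 2)) * exp (|ν| * t) := by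
        refine mul_le_mul (exp_le_exp.2 ?_) ?_ (cosh_pos _).le (exp_pos _).le
        · nlinarith [one_add_sq_div_two_le_cosh t]
        · simpa [abs_mul, abs_of_nonneg ht] using cosh_le_exp_abs (ν * t)
    _ = exp (ν ^ 2 / (2 * x) - x) * exp (-(x / 2) * (t - |ν| / x) ^ 2) := by
        rw [← exp_add, ← exp_add]
        congr 1
        field_simp
        nlinarith [sq_abs ν]

lemma integrableOn_besselKIntegrand (hx : 0 < x) :
    IntegrableOn (besselKIntegrand ν x) (Ioi 0) := by
  refine Integrable.mono' ((((integrable_exp_neg_mul_sq (by positivity : 0 < x / 2)).comp_sub_right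
    (|ν| / x)).const_mul (exp (ν ^ 2 / (2 * x) - x))).integrableOn) ?_ ?_
  · unfold besselKIntegrand
    fun_prop
  · filter_upwards [ae_restrict_mem measurableSet_Ioi] with t ht
    rw [norm_of_nonneg (besselKIntegrand_pos ν t).le]
    exact besselKIntegrand_le_gaussian ν hx (le_of_lt ht)

lemma tendsto_besselKIntegrand_atTop (hx : 0 < x) :
    Tendsto (besselKIntegrand ν x) atTop (𝓝 0) := by
  have hsq : Tendsto (fun t : ℝ => -(x / 2) * (t - |ν| / x) ^ 2) atTop atBot :=
    ((tendsto_pow_atTop two_ne_zero).comp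
      (tendsto_atTop_add_const_right _ _ tendsto_id)).const_mul_atTop_of_neg (by linarith)
  have hgauss := (tendsto_exp_atBot.comp hsq).const_mul (exp (ν ^ 2 / (2 * x) - x))
  rw [mul_zero] at hgauss
  refine squeeze_zero' (Eventually.of_forall fun t => (besselKIntegrand_pos ν t).le) ?_ hgauss
  filter_upwards [eventually_ge_atTop 0] with t ht
  exact besselKIntegrand_le_gaussian ν hx ht

lemma besselK_pos (hx : 0 < x) : 0 < besselK ν x := by
  have h := setIntegral_lt_setIntegral_of_forall_lt (μ := volume) measurableSet_Ioi (by simp)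
    (integrableOn_zero : IntegrableOn (fun _ => (0 : ℝ)) (Ioi (0 : ℝ)))
    (integrableOn_besselKIntegrand ν hx)
    (fun t _ => besselKIntegrand_pos ν t)
  rwa [integral_zero] at h

lemma hasDerivAt_exp_neg_mul_cosh_mul_sinh (t : ℝ) :
    HasDerivAt (fun t => exp (-x * cosh t) * sinh (ν * t))
      (ν * besselKIntegrand ν x t -
        x / 2 * (besselKIntegrand (ν + 1) x t - besselKIntegrand (ν - 1) x t)) t := by
  have hexp : HasDerivAt (fun t => exp (-x * cosh t)) (exp (-x * cosh t) * (-x * sinh t)) t :=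
    ((hasDerivAt_cosh t).const_mul (-x)).exp
  refine (hexp.mul ((hasDerivAt_id' t).const_mul ν).sinh).congr_deriv ?_
  simp only [besselKIntegrand, add_mul, sub_mul, one_mul, mul_one, cosh_add, cosh_sub]
  ring

lemma besselK_add_one_sub_besselK_sub_one (hx : 0 < x) :
    x * (besselK (ν + 1) x - besselK (ν - 1) x) = 2 * ν * besselK ν x := by
  have hint := integrableOn_besselKIntegrand (x := x)
  have hboundary : Tendsto (fun t => exp (-x * cosh t) * sinh (ν * t)) atTop (𝓝 0) := by
    refine squeeze_zero_norm (fun t => ?_) (tendsto_besselKIntegrand_atTop ν hx)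
    rw [norm_mul, norm_of_nonneg (exp_pos _).le, norm_eq_abs]
    exact mul_le_mul_of_nonneg_left (abs_sinh_le_cosh _) (exp_pos _).le
  have hFTC := integral_Ioi_of_hasDerivAt_of_tendsto'
    (fun t _ => hasDerivAt_exp_neg_mul_cosh_mul_sinh ν t)
    (((hint ν hx).const_mul ν).sub' (((hint _ hx).sub' (hint _ hx)).const_mul (x / 2))) hboundary
  rw [integral_sub ((hint ν hx).const_mul ν) (((hint _ hx).sub' (hint _ hx)).const_mul (x / 2)),
    integral_const_mul, integral_const_mul, integral_sub (hint _ hx) (hint _ hx)] at hFTC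
  simp only [mul_zero, sinh_zero, sub_zero] at hFTC
  change ν * besselK ν x - x / 2 * (besselK (ν + 1) x - besselK (ν - 1) x) = 0 at hFTC
  linarith

lemma besselKIntegrand_sub_one_mul_add_one (t : ℝ) :
    besselKIntegrand (ν - 1) x t * besselKIntegrand (ν + 1) x t =
      besselKIntegrand ν x t ^ 2 + (exp (-x * cosh t) * sinh t) ^ 2 := by
  have h := cosh_sub_mul_cosh_add (ν * t) t
  rw [← sub_one_mul, ← add_one_mul] at h
  simp only [besselKIntegrand]
  linear_combination exp (-x * cosh t) ^ 2 * h

lemma besselK_sq_lt_mul (hx : 0 < x) :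
    besselK ν x ^ 2 < besselK (ν - 1) x * besselK (ν + 1) x := by
  have hA := besselK_pos (ν - 1) hx
  set r := besselK ν x / besselK (ν - 1) x with hr
  -- weighted AM-GM, strict because the product exceeds the square by `(e^{-x cosh t} sinh t)²`
  have hpointwise : ∀ t ∈ Ioi (0 : ℝ), 2 * r * besselKIntegrand ν x t <
      r ^ 2 * besselKIntegrand (ν - 1) x t + besselKIntegrand (ν + 1) x t := by
    intro t ht
    have hprod := besselKIntegrand_sub_one_mul_add_one ν (x := x) t
    have hk := besselKIntegrand_pos (ν - 1) (x := x) t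
    have he : 0 < (exp (-x * cosh t) * sinh t) ^ 2 :=
      pow_pos (mul_pos (exp_pos _) (sinh_pos_iff.2 ht)) 2
    nlinarith [sq_nonneg (r * besselKIntegrand (ν - 1) x t - besselKIntegrand ν x t)]
  have hint := integrableOn_besselKIntegrand (x := x)
  have h := setIntegral_lt_setIntegral_of_forall_lt measurableSet_Ioi (by simp)
    ((hint ν hx).const_mul (2 * r))
    (((hint (ν - 1) hx).const_mul (r ^ 2)).fun_add (hint (ν + 1) hx)) hpointwise
  rw [integral_const_mul, integral_add ((hint (ν - 1) hx).const_mul (r ^ 2)) (hint (ν + 1) hx),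
    integral_const_mul] at h
  change 2 * r * besselK ν x < r ^ 2 * besselK (ν - 1) x + besselK (ν + 1) x at h
  -- at `r = K_ν / K_{ν-1}` this reads `K_ν² / K_{ν-1} < K_{ν+1}`
  rw [hr] at h
  field_simp at h
  nlinarith

lemma mul_besselK_lt (hx : 0 < x) :
    x * besselK ν x < (ν + √(ν ^ 2 + x ^ 2)) * besselK (ν - 1) x := by
  have hC : x * besselK (ν + 1) x = x * besselK (ν - 1) x + 2 * ν * besselK ν x := by
    linarith [besselK_add_one_sub_besselK_sub_one ν hx]
  have hturan := besselK_sq_lt_mul ν hx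
  have hA := besselK_pos (ν - 1) hx
  have hR := sq_sqrt (by positivity : 0 ≤ ν ^ 2 + x ^ 2)
  set A := besselK (ν - 1) x
  set B := besselK ν x
  set C := besselK (ν + 1) x
  set R := √(ν ^ 2 + x ^ 2)
  have hq : (x * B - ν * A) ^ 2 < (R * A) ^ 2 := by
    have hdiff : (R * A) ^ 2 - (x * B - ν * A) ^ 2 = x ^ 2 * (A * C - B ^ 2) := by
      linear_combination A ^ 2 * hR - x * A * hC
    nlinarith [mul_pos (pow_pos hx 2) (sub_pos.2 hturan)]
  nlinarith [abs_lt_of_sq_lt_sq' hq (by positivity)]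

end Bessel

section ModeEquation

variable {ν α β s x : ℝ} (hα : 0 < α) (hs : 0 < s)
  (h : x / s * (besselK (ν - 1) (α * s) / besselK ν (α * s)) = β / α)
include hα hs h

lemma pos_of_besselK_ratio_eq (hβ : 0 < β) : 0 < x := by
  have hratio : 0 < besselK (ν - 1) (α * s) / besselK ν (α * s) :=
    div_pos (besselK_pos _ (by positivity)) (besselK_pos _ (by positivity))
  have hlhs : 0 < x / s * (besselK (ν - 1) (α * s) / besselK ν (α * s)) := h ▸ div_pos hβ hα
  exact (div_pos_iff_of_pos_right hs).1 (pos_of_mul_pos_left hlhs hratio.le)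

lemma sq_mul_lt_of_besselK_ratio_eq (hβ : 0 < β) :
    α ^ 2 * x < β * (ν + √(ν ^ 2 + (α * s) ^ 2)) := by
  have hy : 0 < α * s := mul_pos hα hs
  have hA := besselK_pos (ν - 1) hy
  have hB := besselK_pos ν hy
  have hmode : α * x * besselK (ν - 1) (α * s) = β * s * besselK ν (α * s) := by
    rw [div_mul_div_comm, div_eq_div_iff (by positivity) hα.ne'] at h
    linear_combination h
  have hbound := mul_besselK_lt ν hy
  have hscaled : α ^ 2 * x * (s * besselK (ν - 1) (α * s)) <
      β * (ν + √(ν ^ 2 + (α * s) ^ 2)) * (s * besselK (ν - 1) (α * s)) := by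
    nlinarith [mul_lt_mul_of_pos_left hbound (mul_pos hβ hs)]
  exact lt_of_mul_lt_mul_right hscaled (by positivity)

end ModeEquation

lemma sub_sq_mul_lt_of_sq_mul_lt {α β δ ν x : ℝ} (hβ : 0 < β) (hβα : β < α) (hx : 0 < x)
    (h : α ^ 2 * x < β * (ν + √(ν ^ 2 + α ^ 2 * (δ ^ 2 + x ^ 2)))) :
    (α ^ 2 - β ^ 2) * x < β * (ν + √(ν ^ 2 + δ ^ 2 * (α ^ 2 - β ^ 2))) := by
  have hγ : 0 < α ^ 2 - β ^ 2 := by nlinarith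
  set R := √(ν ^ 2 + α ^ 2 * (δ ^ 2 + x ^ 2))
  set S := √(ν ^ 2 + δ ^ 2 * (α ^ 2 - β ^ 2))
  have hR : R ^ 2 = ν ^ 2 + α ^ 2 * (δ ^ 2 + x ^ 2) := sq_sqrt (by positivity)
  have hS : S ^ 2 = ν ^ 2 + δ ^ 2 * (α ^ 2 - β ^ 2) := sq_sqrt (by positivity)
  have hνR : ν ≤ R := le_sqrt_of_sq_le (by nlinarith)
  -- with `q = (α² - β²) x² - 2βν x - β²δ²`: `α² q = (α² x - βν)² - (βR)²`
  have hq : (α ^ 2 - β ^ 2) * x ^ 2 - 2 * β * ν * x - β ^ 2 * δ ^ 2 < 0 := by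
    have hsq : (α ^ 2 * x - β * ν) ^ 2 < (β * R) ^ 2 := by
      have hβν : β * ν ≤ β * R := mul_le_mul_of_nonneg_left hνR hβ.le
      exact sq_lt_sq' (by nlinarith [pow_pos (hβ.trans hβα) 2]) (by linarith)
    nlinarith
  -- and `(α² - β²) q = ((α² - β²) x - βν)² - (βS)²`
  have hsq : ((α ^ 2 - β ^ 2) * x - β * ν) ^ 2 < (β * S) ^ 2 := by nlinarith
  nlinarith [abs_lt_of_sq_lt_sq' hsq (by positivity), sqrt_nonneg (ν ^ 2 + δ ^ 2 * (α ^ 2 - β ^ 2))]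

theorem stmt_0 (lam α β δ γ : ℝ) (hα : 0 < α) (hβ : 0 < β) (hβα : β < α) (hδ : 0 < δ)
    (hγ : γ = Real.sqrt (α ^ 2 - β ^ 2)) (x : ℝ)
    (hx : x / Real.sqrt (δ ^ 2 + x ^ 2) *
        (besselK (lam - 3 / 2) (α * Real.sqrt (δ ^ 2 + x ^ 2)) /
          besselK (lam - 1 / 2) (α * Real.sqrt (δ ^ 2 + x ^ 2))) = β / α) :
    x < β / γ ^ 2 * (lam - 1 / 2 + Real.sqrt ((lam - 1 / 2) ^ 2 + δ ^ 2 * γ ^ 2)) := by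
  have hs : 0 < √(δ ^ 2 + x ^ 2) := sqrt_pos.2 (by positivity)
  rw [show lam - 3 / 2 = lam - 1 / 2 - 1 by ring] at hx
  have hxpos := pos_of_besselK_ratio_eq hα hs hx hβ
  have hbound := sq_mul_lt_of_besselK_ratio_eq hα hs hx hβ
  rw [mul_pow, sq_sqrt (by positivity)] at hbound
  have hγ2 : γ ^ 2 = α ^ 2 - β ^ 2 := by rw [hγ, sq_sqrt (by nlinarith)]
  rw [div_mul_eq_mul_div, lt_div_iff₀ (by nlinarith), hγ2, mul_comm x]
  exact sub_sq_mul_lt_of_sq_mul_lt hβ hβα hxpos hbound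
end

section
/- Let α > 0, 0 < β < α, δ > 0, and set γ = √(α² − β²). Then x = (β/γ²)·[1 + √(β²/α² + δ²γ²)] satisfies the equation (x/√(δ² + x²)) · K_{1/2}(α√(δ² + x²)) / K_{3/2}(α√(δ² + x²)) = β/α; that is, the mode of the generalized hyperbolic distribution GH(2, α, β, δ, 0) equals (β/γ²)·[1 + √(β²/α² + δ²γ²)]. -/
open Real MeasureTheory

/-!
Substituting `t = 2s`, `u = sinh s` in the integral defining `K_ν` uses `cosh 2s = 1 + 2u²` and
`du = cosh s ds`; for `ν = 1/2` and `ν = 3/2` the factor `cosh (2νs) / cosh s` is a polynomial in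
`u`, so `K_ν(x)` becomes a Gaussian integral and `K_{1/2}(z) / K_{3/2}(z) = z / (z + 1)`. The mode
equation for `λ = 2` then reads `α² x = β (1 + α √(δ² + x²))`, whose positive root is the given
value `(β / γ²) (1 + √(β² / α² + δ² γ²))`.
-/

open Set

lemma integral_Ioi_cosh_mul_comp_sinh (g : ℝ → ℝ) :
    ∫ s in Ioi (0 : ℝ), cosh s * g (sinh s) = ∫ u in Ioi (0 : ℝ), g u := by
  have himage : sinh '' Ioi 0 = Ioi 0 := by
    simpa using sinhOrderIso.image_Ioi 0
  have hsubst := integral_image_eq_integral_abs_deriv_smul (s := Ioi (0 : ℝ)) measurableSet_Ioi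
    (fun s _ => (hasDerivAt_sinh s).hasDerivWithinAt) sinh_injective.injOn g
  rw [himage] at hsubst
  rw [hsubst]
  refine setIntegral_congr_fun measurableSet_Ioi fun s _ => ?_
  rw [abs_of_pos (cosh_pos s), smul_eq_mul]

lemma besselK_eq_two_mul_exp_mul_integral {ν : ℝ} (x : ℝ) (p : ℝ → ℝ)
    (hp : ∀ s, cosh (ν * (2 * s)) = cosh s * p (sinh s)) :
    besselK ν x = 2 * exp (-x) * ∫ u in Ioi (0 : ℝ), p u * exp (-(2 * x) * u ^ 2) := by
  have hscale := integral_comp_mul_left_Ioi'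
    (fun t => exp (-x * cosh t) * cosh (ν * t)) 0 two_pos
  rw [mul_zero, smul_eq_mul] at hscale
  rw [besselK, ← hscale,
    ← integral_Ioi_cosh_mul_comp_sinh fun u => p u * exp (-(2 * x) * u ^ 2),
    ← integral_const_mul, ← integral_const_mul]
  refine setIntegral_congr_fun measurableSet_Ioi fun s _ => ?_
  rw [cosh_two_mul, cosh_sq', hp,
    show -x * (1 + sinh s ^ 2 + sinh s ^ 2) = -x + -(2 * x) * sinh s ^ 2 by ring, exp_add]
  ring

lemma integral_Ioi_sq_mul_exp_neg_mul_sq {b : ℝ} (hb : 0 < b) :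
    ∫ u in Ioi (0 : ℝ), u ^ 2 * exp (-b * u ^ 2) = √(π / b) / (4 * b) := by
  have hgamma := integral_rpow_mul_exp_neg_mul_rpow two_pos (by norm_num : (-1 : ℝ) < 2) hb
  simp only [rpow_two] at hgamma
  rw [hgamma, show ((2 : ℝ) + 1) / 2 = 1 / 2 + 1 by norm_num, Gamma_add_one (by norm_num),
    Gamma_one_half_eq, show -((2 : ℝ) + 1) / 2 = -1 + -(1 / 2) by norm_num,
    rpow_add hb, rpow_neg_one, rpow_neg hb.le, ← sqrt_eq_rpow, sqrt_div' _ hb.le]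
  field_simp
  ring

lemma besselK_one_half (x : ℝ) : besselK (1 / 2) x = √(π / (2 * x)) * exp (-x) := by
  rw [besselK_eq_two_mul_exp_mul_integral x (fun _ => 1) (fun s => by ring_nf)]
  simp only [one_mul]
  rw [integral_gaussian_Ioi]
  ring

lemma besselK_three_halves {x : ℝ} (hx : 0 < x) :
    besselK (3 / 2) x = √(π / (2 * x)) * (1 + 1 / x) * exp (-x) := by
  have hp (s : ℝ) : cosh (3 / 2 * (2 * s)) = cosh s * (1 + 4 * sinh s ^ 2) := by
    rw [show 3 / 2 * (2 * s) = 3 * s by ring, cosh_three_mul]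
    linear_combination 4 * cosh s * cosh_sq' s
  have h2x : 0 < 2 * x := by positivity
  have hint0 := integrableOn_rpow_mul_exp_neg_mul_sq h2x (by norm_num : (-1 : ℝ) < 0)
  have hint2 := integrableOn_rpow_mul_exp_neg_mul_sq h2x (by norm_num : (-1 : ℝ) < 2)
  simp only [rpow_zero, one_mul, rpow_two] at hint0 hint2
  have hsplit : ∫ u in Ioi (0 : ℝ), (1 + 4 * u ^ 2) * exp (-(2 * x) * u ^ 2)
      = (∫ u in Ioi (0 : ℝ), exp (-(2 * x) * u ^ 2))
        + 4 * ∫ u in Ioi (0 : ℝ), u ^ 2 * exp (-(2 * x) * u ^ 2) := by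
    rw [← integral_const_mul, ← integral_add hint0 (hint2.const_mul 4)]
    refine setIntegral_congr_fun measurableSet_Ioi fun u _ => ?_
    ring
  rw [besselK_eq_two_mul_exp_mul_integral x (fun u => 1 + 4 * u ^ 2) hp, hsplit,
    integral_gaussian_Ioi, integral_Ioi_sq_mul_exp_neg_mul_sq h2x]
  field_simp

lemma besselK_one_half_div_besselK_three_halves {z : ℝ} (hz : 0 < z) :
    besselK (1 / 2) z / besselK (3 / 2) z = z / (z + 1) := by
  have hsqrt : 0 < √(π / (2 * z)) := sqrt_pos.2 (by positivity)
  rw [besselK_one_half, besselK_three_halves hz]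
  field_simp

lemma div_sqrt_mul_besselK_one_half_div_besselK_three_halves {α δ x : ℝ} (hα : 0 < α)
    (hx : x ≠ 0) :
    x / √(δ ^ 2 + x ^ 2) *
        (besselK (1 / 2) (α * √(δ ^ 2 + x ^ 2)) / besselK (3 / 2) (α * √(δ ^ 2 + x ^ 2)))
      = α * x / (α * √(δ ^ 2 + x ^ 2) + 1) := by
  have hs : 0 < √(δ ^ 2 + x ^ 2) := sqrt_pos.2 (by positivity)
  rw [besselK_one_half_div_besselK_three_halves (by positivity)]
  field_simp

lemma mul_sqrt_sq_add_mode_sq_add_one {α β δ γ M : ℝ} (hα : 0 < α) (hβ : 0 < β) (hβα : β < α)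
    (hγ : γ ^ 2 = α ^ 2 - β ^ 2)
    (hM : M = β / γ ^ 2 * (1 + √(β ^ 2 / α ^ 2 + δ ^ 2 * γ ^ 2))) :
    α * √(δ ^ 2 + M ^ 2) + 1 = α ^ 2 * M / β := by
  have hγpos : 0 < γ ^ 2 := by nlinarith
  have hγ0 : γ ≠ 0 := by rintro rfl; simp at hγpos
  set R := √(β ^ 2 / α ^ 2 + δ ^ 2 * γ ^ 2)
  have hR : α ^ 2 * R ^ 2 = β ^ 2 + α ^ 2 * δ ^ 2 * γ ^ 2 := by
    rw [sq_sqrt (by positivity)]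
    field_simp
  have hsqrt : √(δ ^ 2 + M ^ 2) = (β ^ 2 + α ^ 2 * R) / (α * γ ^ 2) := by
    rw [sqrt_eq_iff_eq_sq (by positivity) (by positivity), hM]
    field_simp
    linear_combination (β ^ 2 - α ^ 2) * hR + α ^ 2 * δ ^ 2 * γ ^ 2 * hγ
  rw [hsqrt, hM]
  field_simp
  linear_combination hγ

theorem stmt_13_general (α β δ γ : ℝ) (hα : 0 < α) (hβ : 0 < β) (hβα : β < α)
    (hγ : γ = Real.sqrt (α ^ 2 - β ^ 2)) :
    β / γ ^ 2 * (1 + Real.sqrt (β ^ 2 / α ^ 2 + δ ^ 2 * γ ^ 2)) /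
        Real.sqrt (δ ^ 2 + (β / γ ^ 2 * (1 + Real.sqrt (β ^ 2 / α ^ 2 + δ ^ 2 * γ ^ 2))) ^ 2) *
      (besselK (1 / 2) (α * Real.sqrt (δ ^ 2 +
          (β / γ ^ 2 * (1 + Real.sqrt (β ^ 2 / α ^ 2 + δ ^ 2 * γ ^ 2))) ^ 2)) /
        besselK (3 / 2) (α * Real.sqrt (δ ^ 2 +
          (β / γ ^ 2 * (1 + Real.sqrt (β ^ 2 / α ^ 2 + δ ^ 2 * γ ^ 2))) ^ 2))) = β / α := by
  have hγ2 : γ ^ 2 = α ^ 2 - β ^ 2 := by rw [hγ, sq_sqrt (by nlinarith)]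
  have hγpos : 0 < γ ^ 2 := by nlinarith
  set M := β / γ ^ 2 * (1 + √(β ^ 2 / α ^ 2 + δ ^ 2 * γ ^ 2)) with hM
  have hMpos : 0 < M := by positivity
  rw [div_sqrt_mul_besselK_one_half_div_besselK_three_halves hα hMpos.ne',
    mul_sqrt_sq_add_mode_sq_add_one hα hβ hβα hγ2 hM]
  field_simp

theorem stmt_13 (α β δ γ : ℝ) (hα : 0 < α) (hβ : 0 < β) (hβα : β < α) (hδ : 0 < δ)
    (hγ : γ = Real.sqrt (α ^ 2 - β ^ 2)) :
    β / γ ^ 2 * (1 + Real.sqrt (β ^ 2 / α ^ 2 + δ ^ 2 * γ ^ 2)) /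
        Real.sqrt (δ ^ 2 + (β / γ ^ 2 * (1 + Real.sqrt (β ^ 2 / α ^ 2 + δ ^ 2 * γ ^ 2))) ^ 2) *
      (besselK (1 / 2) (α * Real.sqrt (δ ^ 2 +
          (β / γ ^ 2 * (1 + Real.sqrt (β ^ 2 / α ^ 2 + δ ^ 2 * γ ^ 2))) ^ 2)) /
        besselK (3 / 2) (α * Real.sqrt (δ ^ 2 +
          (β / γ ^ 2 * (1 + Real.sqrt (β ^ 2 / α ^ 2 + δ ^ 2 * γ ^ 2))) ^ 2))) = β / α :=
  stmt_13_general α β δ γ hα hβ hβα hγ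
end
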